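/- No self-confidence profile z ∈ [0,1]^n with exactly one stubborn agent, i.e., with |S(z)| = 1, is a Nash equilibrium: if S(z) = {k}, then there exists z̄_k ∈ [0,1) such that v_k(z̄_k, z_{−k}) < v_k(z). -/

import Mathlib

open Matrix Filter Topology Finset

section aux
variable {n : ℕ}

lemma aux_Q_apply (z : Fin n → ℝ) (P : Matrix (Fin n) (Fin n) ℝ) (i j : Fin n) :
    ((1 - Matrix.diagonal z) * P + Matrix.diagonal z) i j
      = (1 - z i) * P i j + (if i = j then z i else 0) := by
  have h1 : (1 - Matrix.diagonal z : Matrix (Fin n) (Fin n) ℝ)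
      = Matrix.diagonal (fun i => 1 - z i) := by
    rw [← Matrix.diagonal_one, ← Matrix.diagonal_sub]
  rw [Matrix.add_apply, h1, Matrix.diagonal_mul, Matrix.diagonal_apply]

lemma aux_pow_nonneg {Q : Matrix (Fin n) (Fin n) ℝ}
    (h : ∀ i j, 0 ≤ Q i j) : ∀ s i j, 0 ≤ (Q ^ s) i j := by
  intro s
  induction s with
  | zero =>
    intro i j; rw [pow_zero, Matrix.one_apply]
    split <;> norm_num
  | succ s ih =>
    intro i j
    rw [pow_succ, Matrix.mul_apply]
    exact Finset.sum_nonneg fun l _ => mul_nonneg (ih i l) (h l j)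

lemma aux_pow_rowsum {Q : Matrix (Fin n) (Fin n) ℝ}
    (h : ∀ i, ∑ j, Q i j = 1) : ∀ s i, ∑ j, (Q ^ s) i j = 1 := by
  intro s
  induction s with
  | zero => intro i; simp [Matrix.one_apply]
  | succ s ih =>
    intro i
    simp only [pow_succ, Matrix.mul_apply]
    rw [Finset.sum_comm]
    calc ∑ l, ∑ j, (Q ^ s) i l * Q l j
        = ∑ l, (Q ^ s) i l * ∑ j, Q l j := by
          simp [Finset.mul_sum]
      _ = 1 := by simp [h, ih i]

lemma aux_left_pow {P : Matrix (Fin n) (Fin n) ℝ} {u : Fin n → ℝ}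
    (h : ∀ j, ∑ i, u i * P i j = u j) : ∀ m j, ∑ i, u i * (P ^ m) i j = u j := by
  intro m
  induction m with
  | zero =>
    intro j
    simp [Matrix.one_apply, mul_ite, Finset.sum_ite_eq']
  | succ m ih =>
    intro j
    simp only [pow_succ, Matrix.mul_apply, Finset.mul_sum]
    rw [Finset.sum_comm]
    have key : ∀ l, ∑ i, u i * ((P ^ m) i l * P l j) = u l * P l j := by
      intro l
      simp_rw [← mul_assoc]
      rw [← Finset.sum_mul, ih l]
    simp_rw [key]
    exact h j

lemma aux_unique (P : Matrix (Fin n) (Fin n) ℝ) (hn : 0 < n)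
    (hPprim : ∃ m : ℕ, ∀ i j, 0 < (P ^ m) i j)
    (π : Fin n → ℝ) (hπpos : ∀ i, 0 < π i)
    (hπinv : ∀ j, ∑ i, π i * P i j = π j)
    (w : Fin n → ℝ) (hw : ∀ i, 0 ≤ w i)
    (hwinv : ∀ j, ∑ i, w i * P i j = w j) :
    ∃ c : ℝ, ∀ i, w i = c * π i := by
  haveI : Nonempty (Fin n) := ⟨⟨0, hn⟩⟩
  obtain ⟨m, hm⟩ := hPprim
  obtain ⟨i0, -, hi0⟩ := Finset.exists_mem_eq_inf' Finset.univ_nonempty (fun i => w i / π i)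
  set s := Finset.univ.inf' Finset.univ_nonempty (fun i => w i / π i) with hs
  refine ⟨s, fun i => ?_⟩
  set u : Fin n → ℝ := fun i => w i - s * π i with hu
  have hu0 : ∀ i, 0 ≤ u i := by
    intro i
    have h1 : s ≤ w i / π i := Finset.inf'_le _ (Finset.mem_univ i)
    have h2 := (le_div_iff₀ (hπpos i)).mp h1
    simp only [hu]; linarith
  have hui0 : u i0 = 0 := by
    have h1 : s = w i0 / π i0 := hi0
    have h2 := (hπpos i0).ne'
    simp only [hu, h1]
    field_simp
    ring
  have huinv : ∀ j, ∑ i, u i * P i j = u j := by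
    intro j
    simp only [hu, sub_mul, Finset.sum_sub_distrib, mul_assoc, ← Finset.mul_sum]
    rw [hwinv, hπinv]
  have hpow := aux_left_pow huinv m i0
  rw [hui0] at hpow
  have hz : ∀ i ∈ Finset.univ, u i * (P ^ m) i i0 = 0 := by
    rw [← Finset.sum_eq_zero_iff_of_nonneg
      (fun i _ => mul_nonneg (hu0 i) (hm i i0).le)]
    exact hpow
  have := hz i (Finset.mem_univ i)
  have hui : u i = 0 := by
    rcases mul_eq_zero.mp this with h | h
    · exact h
    · exact absurd h (hm i i0).ne'
  have : w i - s * π i = 0 := hui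
  linarith

end aux

/-- No profile `z ∈ [0,1]ⁿ` with exactly one stubborn agent is a Nash
equilibrium: if `S(z) = {k}`, then there exists `z̄_k ∈ [0,1)` such that
`v_k(z̄_k, z_{-k}) < v_k(z)`. -/
theorem stmt_19 (n : ℕ) (hn : 2 ≤ n)
    (P : Matrix (Fin n) (Fin n) ℝ)
    (hPnn : ∀ i j, 0 ≤ P i j)
    (hProw : ∀ i, ∑ j, P i j = 1)
    (hPdiag : ∀ i, P i i = 0)
    (hPprim : ∃ m : ℕ, ∀ i j, 0 < (P ^ m) i j)
    (π : Fin n → ℝ)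
    (hπpos : ∀ i, 0 < π i)
    (hπsum : ∑ i, π i = 1)
    (hπinv : ∀ j, ∑ i, π i * P i j = π j)
    (σ2 : Fin n → ℝ) (hσ : ∀ i, 0 < σ2 i)
    (H : (Fin n → ℝ) → Matrix (Fin n) (Fin n) ℝ)
    (hH : ∀ z : Fin n → ℝ, (∀ i, z i ∈ Set.Icc (0 : ℝ) 1) →
      ∀ i j, Tendsto
        (fun t : ℕ => (((1 - Matrix.diagonal z) * P + Matrix.diagonal z) ^ t) i j)
        atTop (𝓝 (H z i j)))
    (z : Fin n → ℝ) (hz : ∀ i, z i ∈ Set.Icc (0 : ℝ) 1)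
    (k : Fin n) (hk : z k = 1) (hone : ∀ i, i ≠ k → z i ≠ 1) :
    ∃ t ∈ Set.Ico (0 : ℝ) 1,
      ∑ j, (H (Function.update z k t) k j) ^ 2 * σ2 j <
        ∑ j, (H z k j) ^ 2 * σ2 j := by
  haveI : Nonempty (Fin n) := ⟨⟨0, by omega⟩⟩
  -- Step 1: v_k(z) = σ2 k
  have hQpowk : ∀ s l,
      (((1 - Matrix.diagonal z) * P + Matrix.diagonal z : Matrix (Fin n) (Fin n) ℝ) ^ s) k l
        = if k = l then 1 else 0 := by
    intro s
    induction s with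
    | zero => intro l; rw [pow_zero, Matrix.one_apply]
    | succ s ih =>
      intro l
      rw [pow_succ', Matrix.mul_apply, Finset.sum_eq_single k]
      · rw [aux_Q_apply, hk, ih l]; simp
      · intro b _ hb
        rw [aux_Q_apply, hk]
        rw [if_neg (fun h => hb h.symm)]
        ring
      · intro h; exact absurd (Finset.mem_univ k) h
  have hHz : ∀ j, H z k j = if k = j then 1 else 0 := by
    intro j
    refine tendsto_nhds_unique (hH z hz k j) ?_
    have : (fun t : ℕ =>
        (((1 - Matrix.diagonal z) * P + Matrix.diagonal z : Matrix (Fin n) (Fin n) ℝ) ^ t) k j)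
        = fun _ => if k = j then 1 else 0 := funext fun s => hQpowk s j
    rw [this]
    exact tendsto_const_nhds
  have hvz : ∑ j, (H z k j) ^ 2 * σ2 j = σ2 k := by
    rw [Finset.sum_eq_single k]
    · rw [hHz k, if_pos rfl]; ring
    · intro b _ hb
      rw [hHz b, if_neg (fun h => hb h.symm)]; ring
    · intro h; exact absurd (Finset.mem_univ k) h
  -- Step 2: constants
  have hzk' : ∀ i, i ≠ k → z i < 1 := fun i hi => lt_of_le_of_ne (hz i).2 (hone i hi)
  set A : ℝ := ∑ i ∈ Finset.univ.erase k, π i / (1 - z i) with hA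
  set B : ℝ := ∑ i ∈ Finset.univ.erase k, (π i / (1 - z i)) ^ 2 * σ2 i with hB
  have hne : (Finset.univ.erase k).Nonempty := by
    rw [← Finset.card_pos, Finset.card_erase_of_mem (Finset.mem_univ k)]
    simp only [Finset.card_univ, Fintype.card_fin]
    omega
  have hA0 : 0 < A := by
    refine Finset.sum_pos (fun i hi => ?_) hne
    have hi' := Finset.ne_of_mem_erase hi
    exact div_pos (hπpos i) (by linarith [hzk' i hi'])
  have hB0 : 0 < B := by
    refine Finset.sum_pos (fun i hi => ?_) hne
    have hi' := Finset.ne_of_mem_erase hi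
    have h1 : 0 < π i / (1 - z i) := div_pos (hπpos i) (by linarith [hzk' i hi'])
    exact mul_pos (pow_pos h1 2) (hσ i)
  set ε : ℝ := min (1/2) (π k * A * σ2 k / B) with hε
  have hε0 : 0 < ε := lt_min (by norm_num) (div_pos (mul_pos (mul_pos (hπpos k) hA0) (hσ k)) hB0)
  have hε1 : ε < 1 := lt_of_le_of_lt (min_le_left _ _) (by norm_num)
  have hεB : ε * B ≤ π k * A * σ2 k := by
    have := min_le_right (1/2 : ℝ) (π k * A * σ2 k / B)
    calc ε * B ≤ (π k * A * σ2 k / B) * B := by nlinarith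
      _ = π k * A * σ2 k := by field_simp
  refine ⟨1 - ε, ⟨by linarith, by linarith⟩, ?_⟩
  rw [hvz]
  set z' : Fin n → ℝ := Function.update z k (1 - ε) with hz'def
  have hz'k : z' k = 1 - ε := Function.update_self k _ z
  have hz'ne : ∀ i, i ≠ k → z' i = z i := fun i hi => Function.update_of_ne hi _ z
  have hz'lt : ∀ i, z' i < 1 := by
    intro i
    by_cases hi : i = k
    · rw [hi, hz'k]; linarith
    · rw [hz'ne i hi]; exact hzk' i hi
  have hz'mem : ∀ i, z' i ∈ Set.Icc (0 : ℝ) 1 := by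
    intro i
    by_cases hi : i = k
    · rw [hi, hz'k]; constructor <;> [linarith; linarith]
    · rw [hz'ne i hi]; exact hz i
  have hz'0 : ∀ i, 0 ≤ z' i := fun i => (hz'mem i).1
  set Q' : Matrix (Fin n) (Fin n) ℝ :=
    (1 - Matrix.diagonal z') * P + Matrix.diagonal z' with hQ'def
  have hQ'nn : ∀ i j, 0 ≤ Q' i j := by
    intro i j
    rw [hQ'def, aux_Q_apply]
    have h1 : 0 ≤ (1 - z' i) * P i j := mul_nonneg (by linarith [hz'lt i]) (hPnn i j)
    have h2 : (0:ℝ) ≤ if i = j then z' i else 0 := by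
      split
      · exact hz'0 i
      · exact le_refl 0
    linarith
  have hQ'row : ∀ i, ∑ j, Q' i j = 1 := by
    intro i
    simp only [hQ'def, aux_Q_apply]
    rw [Finset.sum_add_distrib, ← Finset.mul_sum, hProw]
    simp [Finset.sum_ite_eq]
  set h : Fin n → ℝ := fun j => H z' k j with hhdef
  have htend : ∀ j, Tendsto (fun s : ℕ => (Q' ^ s) k j) atTop (𝓝 (h j)) :=
    fun j => hH z' hz'mem k j
  have hsum : ∑ j, h j = 1 := by
    refine tendsto_nhds_unique
      (tendsto_finset_sum _ (fun j _ => htend j)) ?_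
    have : (fun s : ℕ => ∑ j, (Q' ^ s) k j) = fun _ => (1 : ℝ) :=
      funext fun s => aux_pow_rowsum hQ'row s k
    rw [this]
    exact tendsto_const_nhds
  have hfix : ∀ j, ∑ l, h l * Q' l j = h j := by
    intro j
    refine tendsto_nhds_unique ?_ ((htend j).comp (tendsto_add_atTop_nat 1))
    have heq : (fun s : ℕ => ((fun s : ℕ => (Q' ^ s) k j) ∘ (· + 1)) s)
        = fun s : ℕ => ∑ l, (Q' ^ s) k l * Q' l j := by
      funext s
      simp only [Function.comp_apply, pow_succ, Matrix.mul_apply]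
    rw [show ((fun s : ℕ => (Q' ^ s) k j) ∘ (· + 1))
        = fun s : ℕ => ∑ l, (Q' ^ s) k l * Q' l j from heq]
    exact tendsto_finset_sum _ (fun l _ => (htend l).mul_const _)
  have hwinv : ∀ j, ∑ i, (h i * (1 - z' i)) * P i j = h j * (1 - z' j) := by
    intro j
    have h1 := hfix j
    simp only [hQ'def, aux_Q_apply, mul_add, Finset.sum_add_distrib] at h1
    have h2 : ∑ l, h l * (if l = j then z' l else 0) = h j * z' j := by
      simp [mul_ite, Finset.sum_ite_eq']
    rw [h2] at h1
    have h3 : ∑ l, h l * ((1 - z' l) * P l j) = ∑ i, (h i * (1 - z' i)) * P i j := by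
      apply Finset.sum_congr rfl; intro i _; ring
    rw [h3] at h1
    linarith
  have hhnn : ∀ j, 0 ≤ h j := by
    intro j
    refine ge_of_tendsto (htend j) ?_
    exact Eventually.of_forall fun s => aux_pow_nonneg hQ'nn s k j
  obtain ⟨c, hc⟩ := aux_unique P (by omega) hPprim π hπpos hπinv
    (fun i => h i * (1 - z' i))
    (fun i => mul_nonneg (hhnn i) (by linarith [hz'lt i]))
    hwinv
  have hhval : ∀ i, h i = c * π i / (1 - z' i) := by
    intro i
    have h1 : (0 : ℝ) < 1 - z' i := by linarith [hz'lt i]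
    field_simp
    exact hc i
  have hz'k' : (1 : ℝ) - z' k = ε := by rw [hz'k]; ring
  have hc1 : c * (π k / ε + A) = 1 := by
    rw [← hsum, ← Finset.add_sum_erase _ h (Finset.mem_univ k)]
    rw [hhval k, hz'k']
    have : ∑ i ∈ Finset.univ.erase k, h i
        = ∑ i ∈ Finset.univ.erase k, c * (π i / (1 - z i)) := by
      apply Finset.sum_congr rfl
      intro i hi
      rw [hhval i, hz'ne i (Finset.ne_of_mem_erase hi)]
      ring
    rw [this, ← Finset.mul_sum, ← hA]
    ring
  have hc0 : 0 < c := by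
    have hD : 0 < π k / ε + A := by
      have := div_pos (hπpos k) hε0
      linarith
    nlinarith
  have hvz' : ∑ j, h j ^ 2 * σ2 j = c ^ 2 * ((π k / ε) ^ 2 * σ2 k + B) := by
    rw [← Finset.add_sum_erase _ (fun j => h j ^ 2 * σ2 j) (Finset.mem_univ k)]
    rw [hhval k, hz'k']
    have : ∑ i ∈ Finset.univ.erase k, h i ^ 2 * σ2 i
        = ∑ i ∈ Finset.univ.erase k, c ^ 2 * ((π i / (1 - z i)) ^ 2 * σ2 i) := by
      apply Finset.sum_congr rfl
      intro i hi
      rw [hhval i, hz'ne i (Finset.ne_of_mem_erase hi)]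
      ring
    rw [this, ← Finset.mul_sum, ← hB]
    field_simp
  show ∑ j, (H z' k j) ^ 2 * σ2 j < σ2 k
  rw [show (∑ j, (H z' k j) ^ 2 * σ2 j) = ∑ j, h j ^ 2 * σ2 j from rfl, hvz']
  -- final arithmetic
  have hP1 : 0 < π k / ε := div_pos (hπpos k) hε0
  have hBle : B ≤ (π k / ε) * A * σ2 k := by
    rw [div_mul_eq_mul_div, div_mul_eq_mul_div, le_div_iff₀ hε0]
    nlinarith
  have hsq : (c * (π k / ε + A)) ^ 2 = 1 := by rw [hc1]; norm_num
  have hc2 : 0 < c ^ 2 := pow_pos hc0 2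
  have key : (π k / ε) ^ 2 * σ2 k + B < (π k / ε + A) ^ 2 * σ2 k := by
    nlinarith [hBle, mul_pos (mul_pos hP1 hA0) (hσ k),
      mul_pos (mul_pos hA0 hA0) (hσ k)]
  calc c ^ 2 * ((π k / ε) ^ 2 * σ2 k + B)
      < c ^ 2 * ((π k / ε + A) ^ 2 * σ2 k) := mul_lt_mul_of_pos_left key hc2
    _ = (c * (π k / ε + A)) ^ 2 * σ2 k := by ring
    _ = σ2 k := by rw [hsq, one_mul]
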